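/- arXiv:1702.03573 — 2 statements merged into one kernel-verified Lean document; each statement's English description precedes it below -/
import Mathlib

section
/- Let (Ω, 𝓕, (𝓕_t)_{t≥0}, P) be a filtered probability space, let τ : Ω → [0,∞] be a random time admitting an announcing sequence (τ_n)_{n∈ℕ}, and let X = (X_t)_{t≥0} be a real-valued adapted process with right-continuous paths that is bounded from below by a constant and such that for each n the stopped process X^{τ_n} is a supermartingale. Then for almost every ω the limit lim_{t↑τ(ω)} X_t(ω) exists in ℝ (finite); here, when τ(ω) = ∞ this means that lim_{t→∞} X_t(ω) exists in ℝ. -/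
open MeasureTheory Filter Set
open scoped NNReal ENNReal Topology

/-!
Doob's upcrossing inequality, applied to the submartingales `-X^{τₙ}` sampled along the dyadic
grids of mesh `2⁻ᵐ`, bounds the expected number of upcrossings of any `[a, b]` by
`(-c - a)⁺ / (b - a)`, uniformly in `n` and `m`; by Fatou's lemma the `liminf` in `n` of these
counts is a.s. finite for all rational `a < b` simultaneously. If `X` oscillated across rational
levels as `t ↑ τ`, right-continuity would produce arbitrarily many upcrossings at dyadic times
strictly before `τ`, and `X^{τₙ}` inherits them once `τₙ` has passed them. Hence `X` converges
in `[c, ∞]` as `t ↑ τ`; the limit is finite because `E[X^{τₙ}ₙ] ≤ E[X₀]`, again by Fatou.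
-/

noncomputable def dyadic (m k : ℕ) : ℝ≥0 := k / 2 ^ m

lemma dyadic_strictMono (m : ℕ) : StrictMono (dyadic m) := fun i j hij => by
  unfold dyadic
  gcongr

lemma dyadic_mul_two_pow_sub {m M : ℕ} (hmM : m ≤ M) (k : ℕ) :
    dyadic M (k * 2 ^ (M - m)) = dyadic m k := by
  rw [dyadic, dyadic, div_eq_div_iff (by positivity) (by positivity), ← Nat.add_sub_of_le hmM]
  push_cast
  rw [Nat.add_sub_cancel_left]
  ring

lemma exists_dyadic_btwn {x y : ℝ≥0} (hxy : x < y) : ∃ m k, x < dyadic m k ∧ dyadic m k < y := by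
  obtain ⟨m, hm⟩ := exists_pow_lt_of_lt_one (tsub_pos_of_lt hxy) (inv_lt_one_of_one_lt₀ one_lt_two)
  have h2m : (0 : ℝ≥0) < 2 ^ m := by positivity
  have hgap : 1 < (y - x) * 2 ^ m := by
    rwa [inv_pow, inv_lt_iff_one_lt_mul₀ h2m] at hm
  refine ⟨m, ⌊x * 2 ^ m⌋₊ + 1, ?_, ?_⟩
  · rw [dyadic, lt_div_iff₀ h2m]
    exact_mod_cast Nat.lt_floor_add_one _
  · rw [dyadic, div_lt_iff₀ h2m]
    calc ((⌊x * 2 ^ m⌋₊ + 1 : ℕ) : ℝ≥0) ≤ x * 2 ^ m + 1 := by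
          push_cast; gcongr; exact Nat.floor_le (by positivity)
      _ < x * 2 ^ m + (y - x) * 2 ^ m := by gcongr
      _ = y * 2 ^ m := by rw [← add_mul, add_tsub_cancel_of_le hxy.le]

section Upcrossings

variable {a b : ℝ}

def UpcrossesWithin (a b : ℝ) (f : ℕ → ℝ) : ℕ → ℕ → ℕ → Prop
  | N, N', 0 => N ≤ N'
  | N, N', K + 1 => ∃ i j, N ≤ i ∧ i < j ∧ j < N' ∧ f i < a ∧ b < f j ∧
      UpcrossesWithin a b f (j + 1) N' K

namespace UpcrossesWithin

variable {f g : ℕ → ℝ} {N N' K : ℕ}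

lemma mono_left {N₀ : ℕ} (h : UpcrossesWithin a b f N N' K) (hN : N₀ ≤ N) :
    UpcrossesWithin a b f N₀ N' K := by
  cases K with
  | zero => exact hN.trans h
  | succ K =>
    obtain ⟨i, j, hi, hij, hj, hfi, hfj, hrest⟩ := h
    exact ⟨i, j, hN.trans hi, hij, hj, hfi, hfj, hrest⟩

lemma congr (h : UpcrossesWithin a b f N N' K) (hfg : ∀ i < N', f i = g i) :
    UpcrossesWithin a b g N N' K := by
  induction K generalizing N with
  | zero => exact h
  | succ K ih =>
    obtain ⟨i, j, hi, hij, hj, hfi, hfj, hrest⟩ := h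
    exact ⟨i, j, hi, hij, hj, hfg i (hij.trans hj) ▸ hfi, hfg j hj ▸ hfj, ih hrest⟩

lemma left_le_right (h : UpcrossesWithin a b f N N' K) : N ≤ N' := by
  cases K with
  | zero => exact h
  | succ K =>
    obtain ⟨i, j, hi, hij, hj, -⟩ := h
    omega

lemma of_comp_mul {c : ℕ} (hc : 0 < c) (h : UpcrossesWithin a b (fun k => g (k * c)) N N' K) :
    UpcrossesWithin a b g (N * c) (N' * c) K := by
  induction K generalizing N with
  | zero => exact Nat.mul_le_mul_right c h
  | succ K ih =>
    obtain ⟨i, j, hi, hij, hj, hfi, hfj, hrest⟩ := h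
    refine ⟨i * c, j * c, by gcongr, by gcongr, by gcongr, hfi, hfj, (ih hrest).mono_left ?_⟩
    rw [add_mul]
    omega

lemma add_le_upcrossingsBefore {Ω : Type*} {F : ℕ → Ω → ℝ} {ω : Ω} (hab : a < b)
    (h : UpcrossesWithin a b (fun k => F k ω) N N' K) :
    upcrossingsBefore a b F N ω + K ≤ upcrossingsBefore a b F N' ω := by
  induction K generalizing N with
  | zero => simpa using upcrossingsBefore_mono hab h ω
  | succ K ih =>
    obtain ⟨i, j, hi, hij, -, hfi, hfj, hrest⟩ := h
    have := upcrossingsBefore_lt_of_exists_upcrossing hab hi hfi hij.le hfj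
    have := ih hrest
    omega

end UpcrossesWithin

noncomputable def upcrossingCount (a b : ℝ) (f : ℕ → ℝ) : ℝ≥0∞ :=
  ⨆ (K : ℕ) (_ : ∃ N', UpcrossesWithin a b f 0 N' K), (K : ℝ≥0∞)

lemma UpcrossesWithin.le_upcrossingCount {f : ℕ → ℝ} {N N' K : ℕ}
    (h : UpcrossesWithin a b f N N' K) : (K : ℝ≥0∞) ≤ upcrossingCount a b f :=
  le_iSup₂_of_le K ⟨N', h.mono_left N.zero_le⟩ le_rfl

lemma upcrossingCount_le_upcrossings {Ω : Type*} {F : ℕ → Ω → ℝ} {ω : Ω} (hab : a < b) :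
    upcrossingCount a b (fun k => F k ω) ≤ upcrossings a b F ω :=
  iSup₂_le fun K ⟨N', h⟩ => le_iSup_of_le N' <| by
    exact_mod_cast (Nat.le_add_left K _).trans (h.add_le_upcrossingsBefore hab)

lemma upcrossingCount_comp_mul_le {g : ℕ → ℝ} {c : ℕ} (hc : 0 < c) :
    upcrossingCount a b (fun k => g (k * c)) ≤ upcrossingCount a b g :=
  iSup₂_le fun _ ⟨_, h⟩ => (h.of_comp_mul hc).le_upcrossingCount

lemma measurable_upcrossingCount {Ω : Type*} {mΩ : MeasurableSpace Ω} {F : ℕ → Ω → ℝ}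
    (hF : ∀ k, Measurable (F k)) : Measurable fun ω => upcrossingCount a b (fun k => F k ω) := by
  have hpat : ∀ K N N', Measurable fun ω => UpcrossesWithin a b (fun k => F k ω) N N' K := by
    intro K
    induction K with
    | zero => exact fun _ _ => measurable_const
    | succ K ih =>
      intro N N'
      simp only [UpcrossesWithin]
      fun_prop
  classical
  refine Measurable.iSup fun K => ?_
  simp_rw [iSup_eq_if]
  exact .ite (Measurable.exists fun N' => hpat K 0 N').setOf measurable_const measurable_const

lemma upcrossingCount_dyadic_mono (g : ℝ≥0 → ℝ) :
    Monotone fun m => upcrossingCount a b (fun k => g (dyadic m k)) := by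
  refine monotone_nat_of_le_succ fun m => ?_
  have hdy : ∀ k, dyadic (m + 1) (k * 2) = dyadic m k := fun k => by
    simpa using dyadic_mul_two_pow_sub m.le_succ k
  simpa only [hdy] using upcrossingCount_comp_mul_le (g := fun k => g (dyadic (m + 1) k)) two_pos

namespace MeasureTheory

variable {Ω ι κ : Type*} [Preorder ι] [Preorder κ] {mΩ : MeasurableSpace Ω}

def Filtration.comp (𝓕 : Filtration ι mΩ) {u : κ → ι} (hu : Monotone u) : Filtration κ mΩ where
  seq k := 𝓕 (u k)
  mono' _ _ hij := 𝓕.mono (hu hij)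
  le' k := 𝓕.le (u k)

variable {P : Measure Ω} {𝓕 : Filtration ι mΩ}

lemma Supermartingale.measurable {Y : ι → Ω → ℝ} (hY : Supermartingale Y 𝓕 P) (i : ι) :
    Measurable (Y i) :=
  ((hY.stronglyMeasurable i).mono (𝓕.le i)).measurable

lemma Supermartingale.comp {Y : ι → Ω → ℝ} (hY : Supermartingale Y 𝓕 P) {u : κ → ι}
    (hu : Monotone u) : Supermartingale (fun k => Y (u k)) (𝓕.comp hu) P :=
  ⟨fun k => hY.1 (u k), fun _ _ hij => hY.2.1 _ _ (hu hij), fun k => hY.2.2 (u k)⟩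

lemma Supermartingale.lintegral_ofReal_sub_le [IsProbabilityMeasure P] {Y : ι → Ω → ℝ} {c : ℝ}
    (hY : Supermartingale Y 𝓕 P) {s t : ι} (hst : s ≤ t) (hc : ∀ ω, c ≤ Y t ω) :
    ∫⁻ ω, ENNReal.ofReal (Y t ω - c) ∂P ≤ ENNReal.ofReal (∫ ω, Y s ω ∂P - c) := by
  have hint : Integrable (fun ω => Y t ω - c) P := (hY.integrable t).sub (integrable_const c)
  rw [← ofReal_integral_eq_lintegral_ofReal hint (.of_forall fun ω => sub_nonneg.2 (hc ω))]
  refine ENNReal.ofReal_le_ofReal ?_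
  rw [integral_sub (hY.integrable t) (integrable_const c), integral_const, probReal_univ,
    one_smul]
  have := hY.setIntegral_le hst MeasurableSet.univ
  simp only [Measure.restrict_univ] at this
  linarith

lemma Submartingale.lintegral_upcrossings_le_of_le [IsProbabilityMeasure P]
    {𝓖 : Filtration ℕ mΩ} {f : ℕ → Ω → ℝ} {d : ℝ} (hab : a < b) (hf : Submartingale f 𝓖 P)
    (hd : ∀ k ω, f k ω ≤ d) :
    ∫⁻ ω, upcrossings a b f ω ∂P ≤ ENNReal.ofReal (d - a) / ENNReal.ofReal (b - a) := by
  rw [ENNReal.le_div_iff_mul_le (.inl (ENNReal.ofReal_pos.2 (sub_pos.2 hab)).ne')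
    (.inl ENNReal.ofReal_ne_top), mul_comm]
  refine (hf.mul_lintegral_upcrossings_le_lintegral_pos_part a b).trans (iSup_le fun N => ?_)
  calc ∫⁻ ω, ENNReal.ofReal (f N ω - a)⁺ ∂P ≤ ∫⁻ _, ENNReal.ofReal (d - a) ∂P :=
        lintegral_mono fun ω => by
          simpa [posPart, ENNReal.ofReal_max] using
            ENNReal.ofReal_le_ofReal (sub_le_sub_right (hd N ω) a)
    _ = ENNReal.ofReal (d - a) := by simp

end MeasureTheory

namespace MeasureTheory

variable {Ω : Type*} {mΩ : MeasurableSpace Ω} {P : Measure Ω} [IsProbabilityMeasure P]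
  {𝓕 : Filtration ℝ≥0 mΩ} {c : ℝ}

lemma ae_liminf_lt_top_of_lintegral_le {Ω : Type*} {mΩ : MeasurableSpace Ω} {μ : Measure Ω}
    {f : ℕ → Ω → ℝ≥0∞} (hf : ∀ n, Measurable (f n)) {C : ℝ≥0∞} (hC : C ≠ ∞)
    (h : ∀ n, ∫⁻ ω, f n ω ∂μ ≤ C) : ∀ᵐ ω ∂μ, liminf (fun n => f n ω) atTop < ∞ :=
  ae_lt_top (.liminf hf) <| ne_top_of_le_ne_top hC <| (lintegral_liminf_le hf).trans <|
    liminf_le_of_frequently_le' (.of_forall h)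

lemma Supermartingale.lintegral_iSup_upcrossingCount_dyadic_le
    {Y : ℝ≥0 → Ω → ℝ} (hY : Supermartingale Y 𝓕 P) (hc : ∀ t ω, c ≤ Y t ω) (hab : a < b) :
    ∫⁻ ω, ⨆ m, upcrossingCount a b (fun k => -Y (dyadic m k) ω) ∂P ≤
      ENNReal.ofReal (-c - a) / ENNReal.ofReal (b - a) := by
  rw [lintegral_iSup (fun m => measurable_upcrossingCount (F := fun k ω => -Y (dyadic m k) ω)
    fun k => (hY.measurable _).neg)
    fun _ _ hmm' ω => upcrossingCount_dyadic_mono (fun t => -Y t ω) hmm']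
  refine iSup_le fun m => (lintegral_mono fun ω =>
    upcrossingCount_le_upcrossings (F := fun k ω => -Y (dyadic m k) ω) hab).trans ?_
  exact ((hY.comp (dyadic_strictMono m).monotone).neg).lintegral_upcrossings_le_of_le hab
    fun k ω => neg_le_neg (hc _ ω)

variable {Y : ℕ → ℝ≥0 → Ω → ℝ}

lemma ae_forall_liminf_iSup_upcrossingCount_dyadic_lt_top (hY : ∀ n, Supermartingale (Y n) 𝓕 P)
    (hc : ∀ n t ω, c ≤ Y n t ω) :
    ∀ᵐ ω ∂P, ∀ a b : ℚ, a < b →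
      liminf (fun n => ⨆ m, upcrossingCount a b (fun k => -Y n (dyadic m k) ω)) atTop < ∞ := by
  refine ae_all_iff.2 fun a => ae_all_iff.2 fun b => eventually_imp_distrib_left.2 fun hab => ?_
  have hab' : (a : ℝ) < b := Rat.cast_lt.2 hab
  refine ae_liminf_lt_top_of_lintegral_le
    (fun n => .iSup fun m => measurable_upcrossingCount fun k => ((hY n).measurable _).neg)
    (ENNReal.div_lt_top ENNReal.ofReal_ne_top (ENNReal.ofReal_pos.2 (sub_pos.2 hab')).ne').ne
    fun n => (hY n).lintegral_iSup_upcrossingCount_dyadic_le (hc n) hab'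

lemma ae_exists_frequently_le_of_supermartingale (hY : ∀ n, Supermartingale (Y n) 𝓕 P)
    (hc : ∀ n t ω, c ≤ Y n t ω) (h0 : ∀ n, Y n 0 = Y 0 0) :
    ∀ᵐ ω ∂P, ∃ M : ℝ, ∃ᶠ n in atTop, Y n n ω ≤ M := by
  have hfin := ae_liminf_lt_top_of_lintegral_le
    (fun n => ((hY n).measurable n).sub_const c |>.ennreal_ofReal) ENNReal.ofReal_ne_top
    fun n => (h0 n ▸ (hY n).lintegral_ofReal_sub_le zero_le (hc n n))
  filter_upwards [hfin] with ω hω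
  obtain ⟨r, hr, -⟩ := ENNReal.lt_iff_exists_nnreal_btwn.1 hω
  refine ⟨c + r, (frequently_lt_of_liminf_lt (by isBoundedDefault) hr).mono fun n hn => ?_⟩
  rw [ENNReal.ofReal_lt_iff_lt_toReal (sub_nonneg.2 (hc n n ω)) ENNReal.coe_ne_top] at hn
  simp only [ENNReal.coe_toReal] at hn
  linarith

lemma stoppedProcess_coe_apply {ι β : Type*} [LinearOrder ι] [Nonempty ι] {u : ι → Ω → β}
    {σ : Ω → ι} (i : ι) (ω : Ω) :
    stoppedProcess u (fun ω => (σ ω : WithTop ι)) i ω = u (min i (σ ω)) ω := by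
  rcases le_total i (σ ω) with h | h
  · rw [stoppedProcess_eq_of_le (τ := fun ω => (σ ω : WithTop ι)) (WithTop.coe_le_coe.2 h),
      min_eq_left h]
  · rw [stoppedProcess_eq_of_ge (τ := fun ω => (σ ω : WithTop ι)) (WithTop.coe_le_coe.2 h),
      min_eq_right h]
    rfl

end MeasureTheory

section PathwiseConvergence

/- `comap (↑) (𝓝[<] T)` is the filter of times `t : ℝ≥0` increasing to `T : ℝ≥0∞`; it is
`atTop` when `T = ∞` and `⊥` when `T = 0`. -/

variable {g : ℝ≥0 → ℝ} {T : ℝ≥0∞}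

lemma exists_dyadic_mem_of_frequently (hg : ∀ t, ContinuousWithinAt g (Ici t) t) {U : Set ℝ}
    (hU : IsOpen U) (hfreq : ∃ᶠ t in comap (↑) (𝓝[<] T), g t ∈ U) {s : ℝ≥0}
    (hs : (s : ℝ≥0∞) < T) :
    ∃ m k, s < dyadic m k ∧ (dyadic m k : ℝ≥0∞) < T ∧ g (dyadic m k) ∈ U := by
  have hnear : ∀ᶠ t : ℝ≥0 in comap (↑) (𝓝[<] T), (t : ℝ≥0∞) ∈ Ioo (s : ℝ≥0∞) T :=
    preimage_mem_comap (Ioo_mem_nhdsLT hs)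
  obtain ⟨t, hgt, hst, htT⟩ := (hfreq.and_eventually hnear).exists
  obtain ⟨u, htu, hu⟩ := mem_nhdsGE_iff_exists_Ico_subset.1 (hg t (hU.mem_nhds hgt))
  obtain ⟨r, htr, hrT⟩ := ENNReal.lt_iff_exists_nnreal_btwn.1 htT
  obtain ⟨m, k, htk, hk⟩ := exists_dyadic_btwn (lt_min htu (ENNReal.coe_lt_coe.1 htr))
  exact ⟨m, k, (ENNReal.coe_lt_coe.1 hst).trans htk,
    (ENNReal.coe_lt_coe.2 (hk.trans_le (min_le_right _ _))).trans hrT,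
    hu ⟨htk.le, hk.trans_le (min_le_left _ _)⟩⟩

lemma exists_upcrossesWithin_dyadic_of_frequently (hg : ∀ t, ContinuousWithinAt g (Ici t) t)
    (ha : ∃ᶠ t in comap (↑) (𝓝[<] T), g t < a) (hb : ∃ᶠ t in comap (↑) (𝓝[<] T), b < g t)
    (K : ℕ) {s : ℝ≥0} (hs : (s : ℝ≥0∞) < T) :
    ∃ m N N', s < dyadic m N ∧ (dyadic m N' : ℝ≥0∞) < T ∧
      UpcrossesWithin a b (fun k => g (dyadic m k)) N N' K := by
  induction K generalizing s with
  | zero =>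
    obtain ⟨m, k, hsk, hkT, -⟩ := exists_dyadic_mem_of_frequently hg isOpen_Iio ha hs
    exact ⟨m, k, k, hsk, hkT, le_rfl⟩
  | succ K ih =>
    obtain ⟨m₁, i, hsi, hiT, hgi⟩ := exists_dyadic_mem_of_frequently hg isOpen_Iio ha hs
    obtain ⟨m₂, j, hij, hjT, hgj⟩ := exists_dyadic_mem_of_frequently hg isOpen_Ioi hb hiT
    obtain ⟨m₃, N, N', hjN, hN'T, hrest⟩ := ih hjT
    -- pass to a common dyadic grid, of mesh `2⁻ᴹ`
    obtain ⟨M, hm₁, hm₂, hm₃⟩ : ∃ M, m₁ ≤ M ∧ m₂ ≤ M ∧ m₃ ≤ M :=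
      ⟨max m₁ (max m₂ m₃), by omega, by omega, by omega⟩
    have h₁ := dyadic_mul_two_pow_sub hm₁ i
    have h₂ := dyadic_mul_two_pow_sub hm₂ j
    have h₃ := dyadic_mul_two_pow_sub hm₃
    have hrest' := UpcrossesWithin.of_comp_mul (Nat.two_pow_pos _) (g := fun k => g (dyadic M k))
      (hrest.congr fun k _ => by rw [h₃])
    have hij' := (dyadic_strictMono M).lt_iff_lt.1 (h₁ ▸ h₂ ▸ hij)
    have hjN' := (dyadic_strictMono M).lt_iff_lt.1 (h₂ ▸ h₃ N ▸ hjN)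
    refine ⟨M, _, _, h₁ ▸ hsi, h₃ N' ▸ hN'T, _, _, le_rfl, hij', hjN'.trans_le hrest'.left_le_right,
      by simpa only [h₁, mem_Iio] using hgi,
      by simpa only [h₂, mem_Ioi] using hgj, hrest'.mono_left hjN'⟩

lemma liminf_iSup_upcrossingCount_eq_top_of_frequently
    (hg : ∀ t, ContinuousWithinAt g (Ici t) t) {σ : ℕ → ℝ≥0}
    (hσ : Tendsto (fun n => (σ n : ℝ≥0∞)) atTop (𝓝 T))
    (ha : ∃ᶠ t in comap (↑) (𝓝[<] T), g t < a) (hb : ∃ᶠ t in comap (↑) (𝓝[<] T), b < g t) :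
    liminf (fun n => ⨆ m, upcrossingCount a b (fun k => g (min (dyadic m k) (σ n)))) atTop
      = ∞ := by
  obtain ⟨s, -, hs⟩ := (ha.and_eventually (preimage_mem_comap self_mem_nhdsWithin)).exists
  refine eq_top_iff.2 (ENNReal.iSup_natCast ▸ iSup_le fun K => ?_)
  refine le_liminf_of_le (by isBoundedDefault) ?_
  obtain ⟨m, N, N', -, hN'T, hpat⟩ := exists_upcrossesWithin_dyadic_of_frequently hg ha hb K hs
  filter_upwards [hσ.eventually (lt_mem_nhds hN'T)] with n hn
  refine le_iSup_of_le m (hpat.congr fun k hk => ?_).le_upcrossingCount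
  rw [min_eq_left ((dyadic_strictMono m hk).le.trans (ENNReal.coe_lt_coe.1 hn).le)]

end PathwiseConvergence

lemma exists_tendsto_of_forall_rat_not_frequently {α : Type*} {l : Filter α} {x : α → ℝ}
    (hosc : ∀ p q : ℚ, p < q → ¬((∃ᶠ t in l, x t < p) ∧ ∃ᶠ t in l, q < x t)) {c M : ℝ}
    (hc : ∃ᶠ t in l, c ≤ x t) (hM : ∃ᶠ t in l, x t ≤ M) : ∃ L : ℝ, Tendsto x l (𝓝 L) := by
  obtain ⟨L, hL⟩ : ∃ L : EReal, Tendsto (fun t => (x t : EReal)) l (𝓝 L) := by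
    refine tendsto_of_no_upcrossings dense_univ fun a _ b _ hab ⟨ha, hb⟩ => ?_
    obtain ⟨p, hap, hpb⟩ := EReal.exists_rat_btwn_of_lt hab
    obtain ⟨q, hpq, hqb⟩ := EReal.exists_rat_btwn_of_lt hpb
    refine hosc p q (by exact_mod_cast hpq) ⟨ha.mono fun t ht => ?_, hb.mono fun t ht => ?_⟩
    · exact_mod_cast ht.trans hap
    · exact_mod_cast hqb.trans ht
  have hL_top : L ≠ ⊤ := by
    rintro rfl
    obtain ⟨t, hxM, hMx⟩ := (hM.and_eventually (EReal.tendsto_nhds_top_iff_real.1 hL M)).exists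
    exact (EReal.coe_lt_coe_iff.1 hMx).not_ge hxM
  have hL_bot : L ≠ ⊥ := by
    rintro rfl
    obtain ⟨t, hcx, hxc⟩ := (hc.and_eventually (EReal.tendsto_nhds_bot_iff_real.1 hL c)).exists
    exact (EReal.coe_lt_coe_iff.1 hxc).not_ge hcx
  exact ⟨L.toReal, EReal.tendsto_coe.1 (EReal.coe_toReal hL_top hL_bot ▸ hL)⟩

lemma exists_tendsto_comap_nhdsLT_of_liminf_upcrossingCount_lt_top {x : ℝ≥0 → ℝ}
    (hx : ∀ t, ContinuousWithinAt x (Ici t) t) {c : ℝ} (hc : ∀ t, c ≤ x t) {T : ℝ≥0∞}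
    {σ : ℕ → ℝ≥0} (hσT : 0 < T → ∀ n, (σ n : ℝ≥0∞) < T)
    (hσ : Tendsto (fun n => (σ n : ℝ≥0∞)) atTop (𝓝 T))
    (hup : ∀ a b : ℚ, a < b →
      liminf (fun n => ⨆ m, upcrossingCount a b (fun k => -x (min (dyadic m k) (σ n)))) atTop < ∞)
    (hM : ∃ M : ℝ, ∃ᶠ n : ℕ in atTop, x (min (n : ℝ≥0) (σ n)) ≤ M) :
    ∃ L : ℝ, Tendsto x (comap (↑) (𝓝[<] T)) (𝓝 L) := by
  rcases eq_zero_or_pos T with rfl | hT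
  · exact ⟨0, by simp⟩
  have hu : Tendsto (fun n : ℕ => min (n : ℝ≥0) (σ n)) atTop (comap (↑) (𝓝[<] T)) := by
    refine tendsto_comap_iff.2 (tendsto_nhdsWithin_iff.2 ⟨?_, .of_forall fun n => ?_⟩)
    · simpa [Function.comp_def, ENNReal.coe_min] using ENNReal.tendsto_nat_nhds_top.min hσ
    · exact (ENNReal.coe_le_coe.2 (min_le_right _ _)).trans_lt (hσT hT n)
  obtain ⟨M, hM⟩ := hM
  refine exists_tendsto_of_forall_rat_not_frequently (fun p q hpq ⟨hp, hq⟩ => ?_)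
    ((hu.frequently (p := fun t => x t ≤ M) hM).mono fun t _ => hc t)
    (hu.frequently (p := fun t => x t ≤ M) hM)
  -- an oscillation of `x` across `[p, q]` is one of `-x` across `[-q, -p]`
  refine (hup (-q) (-p) (neg_lt_neg hpq)).ne
    (liminf_iSup_upcrossingCount_eq_top_of_frequently (fun t => (hx t).neg) hσ ?_ ?_)
  · exact hq.mono fun t ht => by push_cast; exact neg_lt_neg ht
  · exact hp.mono fun t ht => by push_cast; exact neg_lt_neg ht

lemma tendsto_of_tendsto_comap_nhdsLT {α : Type*} [TopologicalSpace α] {x : ℝ≥0 → α}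
    {T : ℝ≥0∞} {L : α} (h : Tendsto x (comap (↑) (𝓝[<] T)) (𝓝 L)) :
    (T = ∞ → Tendsto x atTop (𝓝 L)) ∧ ∀ r : ℝ≥0, T = r → Tendsto x (𝓝[<] r) (𝓝 L) := by
  refine ⟨?_, ?_⟩
  · rintro rfl
    refine h.mono_left (Tendsto.le_comap (tendsto_nhdsWithin_iff.2 ⟨?_, ?_⟩))
    · exact ENNReal.tendsto_coe_nhds_top.2 tendsto_id
    · exact .of_forall fun _ => ENNReal.coe_lt_top
  · rintro r rfl
    exact h.mono_left (ENNReal.continuous_coe.continuousWithinAt.tendsto_nhdsWithin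
      fun _ => ENNReal.coe_lt_coe.2).le_comap

end Upcrossings

theorem supermartingale_on_stochastic_interval_converges_general
    {Ω : Type*} {mΩ : MeasurableSpace Ω} {P : Measure Ω} [IsProbabilityMeasure P]
    (𝓕 : Filtration ℝ≥0 mΩ)
    (τ : Ω → ℝ≥0∞) (τn : ℕ → Ω → ℝ≥0)
    (hann : ∀ᵐ ω ∂P, (0 < τ ω → ∀ n, (τn n ω : ℝ≥0∞) < τ ω) ∧
      Tendsto (fun n => (τn n ω : ℝ≥0∞)) atTop (𝓝 (τ ω)))
    (X : ℝ≥0 → Ω → ℝ)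
    (hrc : ∀ ω t, ContinuousWithinAt (fun s => X s ω) (Ici t) t)
    (c : ℝ) (hbdd : ∀ t ω, c ≤ X t ω)
    (hsup : ∀ n, Supermartingale (MeasureTheory.stoppedProcess X (fun ω => ((τn n ω : ℝ≥0) : WithTop ℝ≥0))) 𝓕 P) :
    ∀ᵐ ω ∂P, ∃ L : ℝ,
      (τ ω = ∞ → Tendsto (fun t : ℝ≥0 => X t ω) atTop (𝓝 L)) ∧
      (∀ r : ℝ≥0, τ ω = (r : ℝ≥0∞) → Tendsto (fun t : ℝ≥0 => X t ω) (𝓝[<] r) (𝓝 L)) := by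
  have hc : ∀ n t ω, c ≤ stoppedProcess X (fun ω => (τn n ω : WithTop ℝ≥0)) t ω :=
    fun n t ω => stoppedProcess_coe_apply (u := X) t ω ▸ hbdd _ ω
  have h0 : ∀ n, stoppedProcess X (fun ω => (τn n ω : WithTop ℝ≥0)) 0 = X 0 := fun n =>
    funext fun ω => by rw [stoppedProcess_coe_apply, min_eq_left zero_le]
  filter_upwards [hann, ae_forall_liminf_iSup_upcrossingCount_dyadic_lt_top hsup hc,
    ae_exists_frequently_le_of_supermartingale hsup hc fun n => (h0 n).trans (h0 0).symm]
    with ω ⟨hτn, hlim⟩ hup hM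
  simp only [stoppedProcess_coe_apply] at hup hM
  obtain ⟨L, hL⟩ :=
    exists_tendsto_comap_nhdsLT_of_liminf_upcrossingCount_lt_top (hrc ω) (hbdd · ω) hτn hlim hup hM
  exact ⟨L, tendsto_of_tendsto_comap_nhdsLT hL⟩

/-- Supermartingale convergence on a stochastic interval `[0, τ)`:
a right-continuous adapted process, bounded below, whose stoppings along an
announcing sequence for `τ` are supermartingales, has an a.s. finite limit at `τ`. -/
theorem supermartingale_on_stochastic_interval_converges
    {Ω : Type*} {mΩ : MeasurableSpace Ω} {P : Measure Ω} [IsProbabilityMeasure P]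
    (𝓕 : Filtration ℝ≥0 mΩ)
    (τ : Ω → ℝ≥0∞) (τn : ℕ → Ω → ℝ≥0)
    (hstop : ∀ n, IsStoppingTime 𝓕 (fun ω => ((τn n ω : ℝ≥0) : WithTop ℝ≥0)))
    (hmono : ∀ ω, Monotone fun n => τn n ω)
    (hann : ∀ᵐ ω ∂P, (0 < τ ω → ∀ n, (τn n ω : ℝ≥0∞) < τ ω) ∧
      Tendsto (fun n => (τn n ω : ℝ≥0∞)) atTop (𝓝 (τ ω)))
    (X : ℝ≥0 → Ω → ℝ)
    (hadapted : Adapted 𝓕 X)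
    (hrc : ∀ ω t, ContinuousWithinAt (fun s => X s ω) (Ici t) t)
    (c : ℝ) (hbdd : ∀ t ω, c ≤ X t ω)
    (hsup : ∀ n, Supermartingale (MeasureTheory.stoppedProcess X (fun ω => ((τn n ω : ℝ≥0) : WithTop ℝ≥0))) 𝓕 P) :
    ∀ᵐ ω ∂P, ∃ L : ℝ,
      (τ ω = ∞ → Tendsto (fun t : ℝ≥0 => X t ω) atTop (𝓝 L)) ∧
      (∀ r : ℝ≥0, τ ω = (r : ℝ≥0∞) → Tendsto (fun t : ℝ≥0 => X t ω) (𝓝[<] r) (𝓝 L)) :=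
  supermartingale_on_stochastic_interval_converges_general 𝓕 τ τn hann X hrc c hbdd hsup
end

section
/- Let f : [0,∞) → ℝ be right-continuous, let u(t) = inf_{0≤s≤t} |f(s)| be the running infimum of |f|, and let t_0 = inf{t ≥ 0 : u(t) = 0} (with inf ∅ = ∞). Assume t_0 > 0 and inf_{0≤s<t_0} |f(s)| = 0 (the case where |f| reaches zero continuously). For each n ≥ 1 set s_n = inf{t ≥ 0 : u(t) ≤ 1/n}. Then the sequence (s_n)_{n≥1} is nondecreasing, s_n < t_0 for every n ≥ 1, and lim_{n→∞} s_n = t_0. -/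
/-!
The running infimum `u` is antitone and positive on `[0, t₀)`, while `inf_{s < t₀} |f s| = 0`
makes it arbitrarily small there. Hence every level `ε > 0` is first reached strictly before
`t₀`, and any time `c < t₀` is passed by the first passage time of every level below `u c > 0`.
-/

open Filter Set
open scoped NNReal ENNReal Topology

section RunningInf

variable {ι : Type*} [Preorder ι] {g : ι → ℝ}

theorem csInf_image_Iic_le (hg : BddBelow (range g)) (t : ι) : sInf (g '' Iic t) ≤ g t :=
  csInf_le (hg.mono (image_subset_range _ _)) ⟨t, self_mem_Iic, rfl⟩

theorem antitone_csInf_image_Iic (hg : BddBelow (range g)) :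
    Antitone fun t => sInf (g '' Iic t) := fun a _ hab =>
  csInf_le_csInf (hg.mono (image_subset_range _ _)) ⟨g a, a, self_mem_Iic, rfl⟩
    (image_mono (Iic_subset_Iic.mpr hab))

end RunningInf

/-- Junk value `0` (`sInf ∅` in `ℝ≥0`) when `u` never gets down to `c`. -/
noncomputable def firstPassage (u : ℝ≥0 → ℝ) (c : ℝ) : ℝ≥0 :=
  sInf {t | u t ≤ c}

section FirstPassage

variable {u : ℝ≥0 → ℝ} {c c' : ℝ} {t : ℝ≥0}

theorem firstPassage_le (h : u t ≤ c) : firstPassage u c ≤ t :=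
  csInf_le (OrderBot.bddBelow _) h

theorem firstPassage_anti (hc : c ≤ c') (hne : ∃ t, u t ≤ c) :
    firstPassage u c' ≤ firstPassage u c :=
  csInf_le_csInf (OrderBot.bddBelow _) hne fun _ ht => le_trans ht hc

theorem le_firstPassage (hu : Antitone u) (hne : ∃ t, u t ≤ c) (h : c < u t) :
    t ≤ firstPassage u c :=
  le_csInf hne fun _ hs => le_of_not_gt fun hst => (h.trans_le (hu hst.le)).not_ge hs

variable {T : ℝ≥0∞}

theorem firstPassage_lt (happrox : ∀ ε > 0, ∃ t : ℝ≥0, (t : ℝ≥0∞) < T ∧ u t < ε) {ε : ℝ}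
    (hε : 0 < ε) : (firstPassage u ε : ℝ≥0∞) < T := by
  obtain ⟨t, htT, hut⟩ := happrox ε hε
  exact lt_of_le_of_lt (ENNReal.coe_le_coe.mpr (firstPassage_le hut.le)) htT

theorem tendsto_firstPassage (hu : Antitone u) (hpos : ∀ t : ℝ≥0, (t : ℝ≥0∞) < T → 0 < u t)
    (happrox : ∀ ε > 0, ∃ t : ℝ≥0, (t : ℝ≥0∞) < T ∧ u t < ε) :
    Tendsto (fun ε => (firstPassage u ε : ℝ≥0∞)) (𝓝[>] 0) (𝓝 T) := by
  refine tendsto_order.mpr ⟨fun a ha => ?_, fun b hb => ?_⟩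
  · obtain ⟨c, hac, hcT⟩ := exists_between ha
    lift c to ℝ≥0 using (hcT.trans_le le_top).ne
    filter_upwards [Ioo_mem_nhdsGT (hpos c hcT)] with ε ⟨hε, hεc⟩
    obtain ⟨t, -, hut⟩ := happrox ε hε
    exact hac.trans_le (ENNReal.coe_le_coe.mpr (le_firstPassage hu ⟨t, hut.le⟩ hεc))
  · filter_upwards [self_mem_nhdsWithin] with ε hε
    exact (firstPassage_lt happrox hε).trans hb

end FirstPassage

theorem announcing_sequence_for_continuous_hitting_time_general
    (f : ℝ≥0 → ℝ)
    (u : ℝ≥0 → ℝ) (hu : ∀ t, u t = sInf ((fun s => |f s|) '' Iic t))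
    (t₀ : ℝ≥0∞) (ht₀ : t₀ = sInf ((fun t : ℝ≥0 => (t : ℝ≥0∞)) '' {t : ℝ≥0 | u t = 0}))
    (ht₀pos : 0 < t₀)
    (hcont : sInf ((fun s => |f s|) '' {s : ℝ≥0 | (s : ℝ≥0∞) < t₀}) = 0)
    (s : ℕ → ℝ≥0) (hs : ∀ n : ℕ, 1 ≤ n → s n = sInf {t : ℝ≥0 | u t ≤ 1 / (n : ℝ)}) :
    (∀ i j : ℕ, 1 ≤ i → i ≤ j → s i ≤ s j) ∧
    (∀ n : ℕ, 1 ≤ n → (s n : ℝ≥0∞) < t₀) ∧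
    Tendsto (fun n : ℕ => (s n : ℝ≥0∞)) atTop (𝓝 t₀) := by
  have hbdd : BddBelow (range fun s => |f s|) := ⟨0, by rintro _ ⟨s, rfl⟩; exact abs_nonneg _⟩
  have hu_anti : Antitone u := by simpa only [← funext hu] using antitone_csInf_image_Iic hbdd
  have hpos : ∀ t : ℝ≥0, (t : ℝ≥0∞) < t₀ → 0 < u t := fun t ht =>
    (hu t ▸ Real.sInf_nonneg (by rintro _ ⟨s, -, rfl⟩; exact abs_nonneg _)).lt_of_ne' fun h0 =>
      ht.not_ge (ht₀ ▸ sInf_le ⟨t, h0, rfl⟩)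
  have happrox : ∀ ε > 0, ∃ t : ℝ≥0, (t : ℝ≥0∞) < t₀ ∧ u t < ε := fun ε hε => by
    have hne : ((fun s => |f s|) '' {s : ℝ≥0 | (s : ℝ≥0∞) < t₀}).Nonempty :=
      ⟨_, 0, ht₀pos, rfl⟩
    obtain ⟨_, ⟨t, ht, rfl⟩, hft⟩ := exists_lt_of_csInf_lt hne (hcont ▸ hε)
    exact ⟨t, ht, (hu t ▸ csInf_image_Iic_le hbdd t).trans_lt hft⟩
  have hs' : ∀ n : ℕ, 1 ≤ n → s n = firstPassage u (n : ℝ)⁻¹ := fun n hn => by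
    rw [hs n hn, ← one_div]; rfl
  have hinv_pos : ∀ n : ℕ, 1 ≤ n → 0 < (n : ℝ)⁻¹ := fun n hn => by positivity
  refine ⟨fun i j hi hij => ?_, fun n hn => hs' n hn ▸ firstPassage_lt happrox (hinv_pos n hn), ?_⟩
  · rw [hs' i hi, hs' j (hi.trans hij)]
    obtain ⟨t, -, ht⟩ := happrox _ (hinv_pos j (hi.trans hij))
    exact firstPassage_anti (by gcongr) ⟨t, ht.le⟩
  · refine ((tendsto_firstPassage hu_anti hpos happrox).comp
      (tendsto_inv_atTop_nhdsGT_zero.comp tendsto_natCast_atTop_atTop)).congr' ?_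
    filter_upwards [eventually_ge_atTop 1] with n hn
    simp only [Function.comp_apply, hs' n hn]

/-- If the running infimum `u` of `|f|` first reaches zero at `t₀ > 0`, and `|f|`
reaches zero continuously (i.e. `inf_{s < t₀} |f s| = 0`), then the first passage
times `s_n = inf {t : u t ≤ 1/n}` form a nondecreasing sequence with `s_n < t₀`
for all `n ≥ 1` and `s_n → t₀`. -/
theorem announcing_sequence_for_continuous_hitting_time
    (f : ℝ≥0 → ℝ) (hf : ∀ t, ContinuousWithinAt f (Ici t) t)
    (u : ℝ≥0 → ℝ) (hu : ∀ t, u t = sInf ((fun s => |f s|) '' Iic t))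
    (t₀ : ℝ≥0∞) (ht₀ : t₀ = sInf ((fun t : ℝ≥0 => (t : ℝ≥0∞)) '' {t : ℝ≥0 | u t = 0}))
    (ht₀pos : 0 < t₀)
    (hcont : sInf ((fun s => |f s|) '' {s : ℝ≥0 | (s : ℝ≥0∞) < t₀}) = 0)
    (s : ℕ → ℝ≥0) (hs : ∀ n : ℕ, 1 ≤ n → s n = sInf {t : ℝ≥0 | u t ≤ 1 / (n : ℝ)}) :
    (∀ i j : ℕ, 1 ≤ i → i ≤ j → s i ≤ s j) ∧
    (∀ n : ℕ, 1 ≤ n → (s n : ℝ≥0∞) < t₀) ∧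
    Tendsto (fun n : ℕ => (s n : ℝ≥0∞)) atTop (𝓝 t₀) :=
  announcing_sequence_for_continuous_hitting_time_general f u hu t₀ ht₀ ht₀pos hcont s hs
end
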